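/- For probabilities $p \in [0,1]^m$ with $m \ge 1$ and any $\alpha, \beta \in \mathbb{R}$ with $\alpha \le \beta$, the auto-pool aggregates satisfy $\hat P_\alpha(p) \le \hat P_\beta(p)$; in particular the mean-pool value $\hat P_0(p)$ is at most the soft-max-pool value $\hat P_1(p)$, which is at most $\max_i p_i$. -/

import Mathlib

/-!
The derivative of `α ↦ P̂_α(p)` is the variance of `p` under the softmax weights, hence
nonnegative. A calculus-free form of the same fact: for `α ≤ β` the reweighting
`exp ((β - α) p)` varies together with `p`, so the weighted Chebyshev sum inequality with
weights `exp (α p)` gives `P̂_α(p) ≤ P̂_β(p)`. Since `P̂_α(p)` is a convex combination of the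
`p i`, it is at most their maximum.
-/

open Finset Real

variable {ι : Type*} [Fintype ι]

theorem sum_sum_mul_mul_sub_mul_sub (w f g : ι → ℝ) :
    ∑ i, ∑ j, w i * w j * ((f j - f i) * (g j - g i)) =
      2 * ((∑ i, w i) * ∑ i, w i * (f i * g i) - (∑ i, w i * f i) * ∑ i, w i * g i) := by
  have expand : ∀ i j, w i * w j * ((f j - f i) * (g j - g i)) =
      w i * (w j * (f j * g j)) + w i * (f i * g i) * w j
        - w i * g i * (w j * f j) - w i * f i * (w j * g j) := fun i j => by ring
  simp only [expand, sum_sub_distrib, sum_add_distrib, ← sum_mul_sum]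
  ring

theorem Monovary.sum_mul_sum_le_sum_mul_sum_of_nonneg {w f g : ι → ℝ} (hw : ∀ i, 0 ≤ w i)
    (hfg : Monovary f g) :
    (∑ i, w i * f i) * (∑ i, w i * g i) ≤ (∑ i, w i) * ∑ i, w i * (f i * g i) := by
  have := sum_sum_mul_mul_sub_mul_sub w f g ▸ sum_nonneg fun i _ => sum_nonneg fun j _ =>
    mul_nonneg (mul_nonneg (hw i) (hw j)) (hfg.sub_mul_sub_nonneg i j)
  linarith

noncomputable def autopool (α : ℝ) (p : ι → ℝ) : ℝ :=
  ∑ i, p i * (exp (α * p i) / ∑ j, exp (α * p j))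

theorem sum_exp_mul_pos [Nonempty ι] (α : ℝ) (p : ι → ℝ) : 0 < ∑ j, exp (α * p j) :=
  sum_pos (fun _ _ => exp_pos _) univ_nonempty

theorem autopool_eq_div (α : ℝ) (p : ι → ℝ) :
    autopool α p = (∑ i, p i * exp (α * p i)) / ∑ j, exp (α * p j) := by
  simp only [autopool, sum_div, mul_div_assoc]

theorem monotone_autopool [Nonempty ι] (p : ι → ℝ) : Monotone fun α => autopool α p := by
  intro α β hαβ
  have hmono : Monovary (fun i => exp ((β - α) * p i)) p :=
    (monovary_self p).comp_monotone_left
      (exp_monotone.comp (monotone_mul_left_of_nonneg (sub_nonneg.2 hαβ)))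
  have hreweight : ∀ i, exp (α * p i) * exp ((β - α) * p i) = exp (β * p i) := fun i => by
    rw [← exp_add]; ring_nf
  have hreweight_mul : ∀ i, exp (α * p i) * (exp ((β - α) * p i) * p i) = p i * exp (β * p i) :=
    fun i => by rw [← mul_assoc, hreweight, mul_comm]
  have key := hmono.sum_mul_sum_le_sum_mul_sum_of_nonneg (w := fun i => exp (α * p i))
    fun i => (exp_pos _).le
  simp only [hreweight_mul, hreweight] at key
  simp only [mul_comm (exp _) (p _)] at key
  show autopool α p ≤ autopool β p
  rw [autopool_eq_div, autopool_eq_div, div_le_div_iff₀ (sum_exp_mul_pos α p)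
    (sum_exp_mul_pos β p)]
  linarith

theorem autopool_le_iSup [Nonempty ι] (α : ℝ) (p : ι → ℝ) : autopool α p ≤ ⨆ i, p i := by
  have hweights : ∑ i, exp (α * p i) / ∑ j, exp (α * p j) = 1 := by
    rw [← sum_div, div_self (sum_exp_mul_pos α p).ne']
  calc autopool α p ≤ ∑ i, (⨆ i, p i) * (exp (α * p i) / ∑ j, exp (α * p j)) :=
        sum_le_sum fun i _ => mul_le_mul_of_nonneg_right
          (le_ciSup (Set.finite_range p).bddAbove i)
          (div_nonneg (exp_pos _).le (sum_exp_mul_pos α p).le)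
    _ = ⨆ i, p i := by rw [← mul_sum, hweights, mul_one]

theorem autopool_monotone_in_alpha_general (m : ℕ) (hm : 1 ≤ m) (p : Fin m → ℝ) :
    (∀ α β : ℝ, α ≤ β →
      (∑ i, p i * (Real.exp (α * p i) / ∑ j, Real.exp (α * p j)))
        ≤ ∑ i, p i * (Real.exp (β * p i) / ∑ j, Real.exp (β * p j))) ∧
    (∑ i, p i * (Real.exp ((0 : ℝ) * p i) / ∑ j, Real.exp ((0 : ℝ) * p j)))
      ≤ (∑ i, p i * (Real.exp ((1 : ℝ) * p i) / ∑ j, Real.exp ((1 : ℝ) * p j))) ∧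
    (∑ i, p i * (Real.exp ((1 : ℝ) * p i) / ∑ j, Real.exp ((1 : ℝ) * p j)))
      ≤ ⨆ i, p i := by
  have : Nonempty (Fin m) := Fin.pos_iff_nonempty.1 hm
  exact ⟨fun α β hαβ => monotone_autopool p hαβ, monotone_autopool p zero_le_one,
    autopool_le_iSup 1 p⟩

theorem autopool_monotone_in_alpha (m : ℕ) (hm : 1 ≤ m) (p : Fin m → ℝ)
    (hp : ∀ i, p i ∈ Set.Icc (0 : ℝ) 1) :
    (∀ α β : ℝ, α ≤ β →
      (∑ i, p i * (Real.exp (α * p i) / ∑ j, Real.exp (α * p j)))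
        ≤ ∑ i, p i * (Real.exp (β * p i) / ∑ j, Real.exp (β * p j))) ∧
    (∑ i, p i * (Real.exp ((0 : ℝ) * p i) / ∑ j, Real.exp ((0 : ℝ) * p j)))
      ≤ (∑ i, p i * (Real.exp ((1 : ℝ) * p i) / ∑ j, Real.exp ((1 : ℝ) * p j))) ∧
    (∑ i, p i * (Real.exp ((1 : ℝ) * p i) / ∑ j, Real.exp ((1 : ℝ) * p j)))
      ≤ ⨆ i, p i :=
  autopool_monotone_in_alpha_general m hm p
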